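/- Let {Xⁿ} be a visual approximation of width w with visual parameter Λ > 1 for a bounded metric space (S,d), and let d' be another metric on S. Then {Xⁿ} is a visual approximation of width w for (S,d') if and only if the identity map id_S : (S,d) → (S,d') is a snowflake equivalence, i.e., there exist α > 0 and C ≥ 1 with (1/C)·d(x,y)^α ≤ d'(x,y) ≤ C·d(x,y)^α for all x,y ∈ S. Moreover, in that case the visual parameter Λ' of {Xⁿ} for (S,d') satisfies Λ' = Λ^α. -/

import Mathlib

/-!
Whether `x` and `y` are proximate at level `n` (they lie in tiles of `Xⁿ` whose
`U_w`-neighbourhoods meet) depends only on the tiles, and for a visual approximation the last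
level `m` at which distinct points are proximate satisfies `d x y ≍ Λ ^ (-m)`. For two visual
metrics with parameters `Λ`, `Λ'` this gives `d' x y ≍ Λ' ^ (-m) = (Λ ^ (-m)) ^ α ≍ d x y ^ α`
with `α = log_Λ Λ'`. Conversely, raising the diameter and separation estimates for `d` to the
power `α` yields those for `d' ≍ d ^ α` with parameter `Λ ^ α`.
-/

open Set

variable {S : Type*}

/-- A chain of tiles in a cover `T`: consecutive tiles intersect. -/
def TileChain (T : Set (Set S)) (A B : Set S) (k : ℕ) : Prop :=
  ∃ c : ℕ → Set S, c 0 = A ∧ c k = B ∧ (∀ i, i ≤ k → c i ∈ T) ∧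
    ∀ i, i < k → (c i ∩ c (i + 1)).Nonempty

/-- The width-`w` neighborhood `U_w(A)` of a tile `A` in a cover `T`. -/
def Uw (T : Set (Set S)) (w : ℕ) (A : Set S) : Set S :=
  ⋃₀ {B | B ∈ T ∧ ∃ k, k ≤ w ∧ TileChain T A B k}

/-- `d` is a metric on `S` (as a distance function). -/
def IsMetricFun (d : S → S → ℝ) : Prop :=
  (∀ x y, 0 ≤ d x y) ∧ (∀ x y, d x y = 0 ↔ x = y) ∧ (∀ x y, d x y = d y x) ∧
    ∀ x y z, d x z ≤ d x y + d y z

/-- Diameter of a set with respect to a distance function `d`. -/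
noncomputable def diamOf (d : S → S → ℝ) (A : Set S) : ℝ :=
  sSup {t | ∃ x ∈ A, ∃ y ∈ A, t = d x y}

/-- `{Xⁿ}` is a visual approximation of width `w` with visual parameter `Λ` for `(S,d)`. -/
def IsVisualWith (d : S → S → ℝ) (X : ℕ → Set (Set S)) (w : ℕ) (Λ : ℝ) : Prop :=
  (∀ n, ⋃₀ X n = Set.univ) ∧ X 0 = {Set.univ} ∧
  ∃ C : ℝ, 1 ≤ C ∧ ∀ n : ℕ, ∀ A ∈ X n,
    (Λ ^ (-(n : ℤ)) / C ≤ diamOf d A ∧ diamOf d A ≤ C * Λ ^ (-(n : ℤ))) ∧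
    ∀ B ∈ X n, Uw (X n) w A ∩ Uw (X n) w B = ∅ →
      ∀ a ∈ A, ∀ b ∈ B, Λ ^ (-(n : ℤ)) / C ≤ d a b

/-- `m_w(x, y)` is the largest `n` with `Proximate X w n x y`. -/
def Proximate (X : ℕ → Set (Set S)) (w n : ℕ) (x y : S) : Prop :=
  ∃ A ∈ X n, ∃ B ∈ X n, x ∈ A ∧ y ∈ B ∧ (Uw (X n) w A ∩ Uw (X n) w B).Nonempty

def IsSnowflakeEquiv (d d' : S → S → ℝ) (α C : ℝ) : Prop :=
  ∀ x y, d x y ^ α / C ≤ d' x y ∧ d' x y ≤ C * d x y ^ α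

lemma subset_Uw {T : Set (Set S)} {A : Set S} (hA : A ∈ T) (w : ℕ) : A ⊆ Uw T w A :=
  fun _ hz => ⟨A, ⟨hA, 0, Nat.zero_le w, fun _ => A, rfl, rfl, fun _ _ => hA,
    fun i hi => absurd hi (Nat.not_lt_zero i)⟩, hz⟩

lemma proximate_of_mem {X : ℕ → Set (Set S)} {n : ℕ} {A : Set S} (hA : A ∈ X n) (w : ℕ)
    {x y : S} (hx : x ∈ A) (hy : y ∈ A) : Proximate X w n x y :=
  ⟨A, hA, A, hA, hx, hy, x, subset_Uw hA w hx, subset_Uw hA w hx⟩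

lemma proximate_zero {X : ℕ → Set (Set S)} (h0 : X 0 = {Set.univ}) (w : ℕ) (x y : S) :
    Proximate X w 0 x y :=
  proximate_of_mem (h0 ▸ Set.mem_singleton _) w (Set.mem_univ x) (Set.mem_univ y)

lemma exists_proximate_not_proximate_succ {X : ℕ → Set (Set S)} {w : ℕ} {x y : S}
    (h0 : X 0 = {Set.univ}) (hfar : ∃ n, ¬ Proximate X w n x y) :
    ∃ m, Proximate X w m x y ∧ ¬ Proximate X w (m + 1) x y := by
  obtain ⟨n, hn⟩ := hfar
  by_contra! hstep
  exact hn (Nat.rec (proximate_zero h0 w x y) hstep n)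

section Metric

variable {d d' : S → S → ℝ}

lemma dist_le_diamOf (hbd : ∃ M : ℝ, ∀ x y, d x y ≤ M) {A : Set S} {p q : S}
    (hp : p ∈ A) (hq : q ∈ A) : d p q ≤ diamOf d A := by
  obtain ⟨M, hM⟩ := hbd
  exact le_csSup ⟨M, by rintro t ⟨x, -, y, -, rfl⟩; exact hM x y⟩ ⟨p, hp, q, hq, rfl⟩

lemma diamOf_nonneg (hd : ∀ x y, 0 ≤ d x y) (A : Set S) : 0 ≤ diamOf d A :=
  Real.sSup_nonneg (by rintro t ⟨x, -, y, -, rfl⟩; exact hd x y)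

lemma dist_le_of_chain (hd : IsMetricFun d) (hbd : ∃ M : ℝ, ∀ x y, d x y ≤ M)
    {T : Set (Set S)} {D : ℝ} (hD : ∀ A ∈ T, diamOf d A ≤ D) {c : ℕ → Set S} :
    ∀ k : ℕ, (∀ i ≤ k, c i ∈ T) → (∀ i < k, (c i ∩ c (i + 1)).Nonempty) →
      ∀ p ∈ c 0, ∀ q ∈ c k, d p q ≤ (k + 1) * D
  | 0, hmem, _, p, hp, q, hq => by
    simpa using (dist_le_diamOf hbd hp hq).trans (hD _ (hmem 0 le_rfl))
  | k + 1, hmem, hchain, p, hp, q, hq => by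
    obtain ⟨t, htk, htk'⟩ := hchain k k.lt_succ_self
    have hpt : d p t ≤ (k + 1) * D :=
      dist_le_of_chain hd hbd hD k (fun i hi => hmem i (hi.trans k.le_succ))
        (fun i hi => hchain i (hi.trans k.lt_succ_self)) p hp t htk
    have htq : d t q ≤ D := (dist_le_diamOf hbd htk' hq).trans (hD _ (hmem (k + 1) le_rfl))
    calc d p q ≤ d p t + d t q := hd.2.2.2 p t q
      _ ≤ (k + 1) * D + D := add_le_add hpt htq
      _ = ((k + 1 : ℕ) + 1) * D := by push_cast; ring

lemma dist_le_of_mem_Uw (hd : IsMetricFun d) (hbd : ∃ M : ℝ, ∀ x y, d x y ≤ M)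
    {T : Set (Set S)} {D : ℝ} (hD : ∀ A ∈ T, diamOf d A ≤ D) (hD0 : 0 ≤ D)
    {w : ℕ} {A : Set S} {p z : S} (hp : p ∈ A) (hz : z ∈ Uw T w A) :
    d p z ≤ (w + 1) * D := by
  obtain ⟨B, ⟨-, k, hkw, c, rfl, rfl, hmem, hchain⟩, hzB⟩ := hz
  calc d p z ≤ (k + 1) * D := dist_le_of_chain hd hbd hD k hmem hchain p hp z hzB
    _ ≤ (w + 1) * D := by gcongr

section Visual

variable {X : ℕ → Set (Set S)} {w : ℕ} {Λ : ℝ}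

lemma IsVisualWith.exists_dist_bounds (hvis : IsVisualWith d X w Λ) (hd : IsMetricFun d)
    (hbd : ∃ M : ℝ, ∀ x y, d x y ≤ M) (hΛ : 0 < Λ) :
    ∃ C : ℝ, 1 ≤ C ∧ ∀ n : ℕ, ∀ x y : S,
      (Proximate X w n x y → d x y ≤ C * Λ ^ (-(n : ℤ))) ∧
      (¬ Proximate X w n x y → Λ ^ (-(n : ℤ)) / C ≤ d x y) := by
  obtain ⟨hcov, -, C₁, hC₁, hmain⟩ := hvis
  have hC₁C : C₁ ≤ (2 * w + 2) * C₁ := by nlinarith [w.cast_nonneg (α := ℝ)]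
  refine ⟨(2 * w + 2) * C₁, hC₁.trans hC₁C, fun n x y => ⟨?_, fun hfar => ?_⟩⟩
  · rintro ⟨A, hA, B, hB, hxA, hyB, z, hzA, hzB⟩
    have hD : ∀ T ∈ X n, diamOf d T ≤ C₁ * Λ ^ (-(n : ℤ)) := fun T hT => (hmain n T hT).1.2
    have hD0 : 0 ≤ C₁ * Λ ^ (-(n : ℤ)) := by positivity
    have hxz := dist_le_of_mem_Uw hd hbd hD hD0 hxA hzA
    have hyz := dist_le_of_mem_Uw hd hbd hD hD0 hyB hzB
    calc d x y ≤ d x z + d z y := hd.2.2.2 x z y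
      _ = d x z + d y z := by rw [hd.2.2.1 z y]
      _ ≤ (2 * w + 2) * C₁ * Λ ^ (-(n : ℤ)) := by linarith
  · obtain ⟨A, hA, hxA⟩ : x ∈ ⋃₀ X n := hcov n ▸ Set.mem_univ x
    obtain ⟨B, hB, hyB⟩ : y ∈ ⋃₀ X n := hcov n ▸ Set.mem_univ y
    have hdisj : Uw (X n) w A ∩ Uw (X n) w B = ∅ :=
      Set.not_nonempty_iff_eq_empty.1 fun h => hfar ⟨A, hA, B, hB, hxA, hyB, h⟩
    calc Λ ^ (-(n : ℤ)) / ((2 * w + 2) * C₁) ≤ Λ ^ (-(n : ℤ)) / C₁ := by gcongr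
      _ ≤ d x y := (hmain n A hA).2 B hB hdisj x hxA y hyB

lemma IsVisualWith.exists_not_proximate (hvis : IsVisualWith d X w Λ) (hd : IsMetricFun d)
    (hbd : ∃ M : ℝ, ∀ x y, d x y ≤ M) (hΛ : 1 < Λ) {x y : S} (hxy : x ≠ y) :
    ∃ n, ¬ Proximate X w n x y := by
  obtain ⟨C, hC, hbounds⟩ := hvis.exists_dist_bounds hd hbd (zero_lt_one.trans hΛ)
  have hpos : 0 < d x y := (hd.1 x y).lt_of_ne fun h => hxy ((hd.2.1 x y).1 h.symm)
  obtain ⟨n, hn⟩ := exists_pow_lt_of_lt_one (div_pos hpos (zero_lt_one.trans_le hC))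
    (inv_lt_one_of_one_lt₀ hΛ)
  refine ⟨n, fun hnear => hn.not_ge ?_⟩
  rw [div_le_iff₀ (zero_lt_one.trans_le hC), inv_pow, ← zpow_natCast, ← zpow_neg, mul_comm]
  exact (hbounds n x y).1 hnear

lemma IsVisualWith.exists_dist_bounds_of_last_proximate (hvis : IsVisualWith d X w Λ)
    (hd : IsMetricFun d) (hbd : ∃ M : ℝ, ∀ x y, d x y ≤ M) (hΛ : 1 < Λ) :
    ∃ C : ℝ, 1 ≤ C ∧ ∀ (m : ℕ) (x y : S), Proximate X w m x y →
      ¬ Proximate X w (m + 1) x y → Λ ^ (-(m : ℤ)) ≤ C * d x y ∧ d x y ≤ C * Λ ^ (-(m : ℤ)) := by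
  have hΛ0 : 0 < Λ := zero_lt_one.trans hΛ
  obtain ⟨C, hC, hbounds⟩ := hvis.exists_dist_bounds hd hbd hΛ0
  refine ⟨C * Λ, one_le_mul_of_one_le_of_one_le hC hΛ.le, fun m x y hnear hfar => ⟨?_, ?_⟩⟩
  · have hsucc : Λ ^ (-((m + 1 : ℕ) : ℤ)) = Λ ^ (-(m : ℤ)) / Λ := by
      rw [Nat.cast_succ, neg_add', zpow_sub_one₀ hΛ0.ne', div_eq_mul_inv]
    have := (hbounds (m + 1) x y).2 hfar
    rw [hsucc, div_div, div_le_iff₀ (by positivity)] at this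
    linarith
  · calc d x y ≤ C * Λ ^ (-(m : ℤ)) := (hbounds m x y).1 hnear
      _ ≤ C * Λ * Λ ^ (-(m : ℤ)) := by
        gcongr
        exact le_mul_of_one_le_right (zero_le_one.trans hC) hΛ.le

end Visual

lemma rpow_diamOf_le (hd : ∀ x y, 0 ≤ d x y) (hbd' : ∃ M : ℝ, ∀ x y, d' x y ≤ M) {α C : ℝ}
    (hα : 0 < α) (hC : 0 < C) (hsnow : IsSnowflakeEquiv d d' α C) (A : Set S) :
    diamOf d A ^ α ≤ C * diamOf d' A := by
  have hd' : ∀ x y, 0 ≤ d' x y := fun x y =>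
    (div_nonneg (Real.rpow_nonneg (hd x y) α) hC.le).trans (hsnow x y).1
  have hdiam' : 0 ≤ C * diamOf d' A := mul_nonneg hC.le (diamOf_nonneg hd' A)
  refine (Real.le_rpow_inv_iff_of_pos (diamOf_nonneg hd A) hdiam' hα).1 <|
    Real.sSup_le ?_ (by positivity)
  rintro t ⟨x, hx, y, hy, rfl⟩
  refine (Real.le_rpow_inv_iff_of_pos (hd x y) hdiam' hα).2 ?_
  calc d x y ^ α ≤ C * d' x y := (div_le_iff₀' hC).1 (hsnow x y).1
    _ ≤ C * diamOf d' A := by gcongr; exact dist_le_diamOf hbd' hx hy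

lemma diamOf_le_rpow (hd : ∀ x y, 0 ≤ d x y) (hbd : ∃ M : ℝ, ∀ x y, d x y ≤ M) {α C : ℝ}
    (hα : 0 ≤ α) (hC : 0 ≤ C) (hsnow : IsSnowflakeEquiv d d' α C) (A : Set S) :
    diamOf d' A ≤ C * diamOf d A ^ α := by
  refine Real.sSup_le ?_ (mul_nonneg hC (Real.rpow_nonneg (diamOf_nonneg hd A) α))
  rintro t ⟨x, hx, y, hy, rfl⟩
  calc d' x y ≤ C * d x y ^ α := (hsnow x y).2
    _ ≤ C * diamOf d A ^ α := by gcongr; exacts [hd x y, dist_le_diamOf hbd hx hy]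

end Metric

lemma snowflake_bounds_of_comparable {t t' τ α C C' : ℝ} (ht : 0 ≤ t) (hτ : 0 ≤ τ)
    (hα : 0 ≤ α) (hC : 0 < C) (hC' : 0 < C') (htτ : t ≤ C * τ) (hτt : τ ≤ C * t)
    (ht'τ : t' ≤ C' * τ ^ α) (hτt' : τ ^ α ≤ C' * t') :
    t ^ α / (C ^ α * C') ≤ t' ∧ t' ≤ C ^ α * C' * t ^ α := by
  constructor
  · rw [div_le_iff₀ (by positivity)]
    calc t ^ α ≤ (C * τ) ^ α := Real.rpow_le_rpow ht htτ hα
      _ = C ^ α * τ ^ α := Real.mul_rpow hC.le hτ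
      _ ≤ C ^ α * (C' * t') := by gcongr
      _ = t' * (C ^ α * C') := by ring
  · calc t' ≤ C' * τ ^ α := ht'τ
      _ ≤ C' * (C * t) ^ α := by gcongr
      _ = C ^ α * C' * t ^ α := by rw [Real.mul_rpow hC.le ht]; ring

section Snowflake

variable {d d' : S → S → ℝ} {X : ℕ → Set (Set S)} {w : ℕ} {Λ Λ' : ℝ}

lemma IsVisualWith.of_isSnowflakeEquiv (hvis : IsVisualWith d X w Λ)
    (hd : ∀ x y, 0 ≤ d x y) (hbd : ∃ M : ℝ, ∀ x y, d x y ≤ M)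
    (hbd' : ∃ M : ℝ, ∀ x y, d' x y ≤ M) (hΛ : 0 < Λ) {α C : ℝ} (hα : 0 < α) (hC : 1 ≤ C)
    (hsnow : IsSnowflakeEquiv d d' α C) :
    IsVisualWith d' X w (Λ ^ α) := by
  obtain ⟨hcov, h0, C₁, hC₁, hmain⟩ := hvis
  have hC0 : 0 < C := zero_lt_one.trans_le hC
  have hC₁0 : 0 < C₁ := zero_lt_one.trans_le hC₁
  refine ⟨hcov, h0, C * C₁ ^ α,
    one_le_mul_of_one_le_of_one_le hC (Real.one_le_rpow hC₁ hα.le), fun n A hA => ?_⟩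
  obtain ⟨⟨hlo, hhi⟩, hsep⟩ := hmain n A hA
  set τ := Λ ^ (-(n : ℤ))
  have hτ : 0 ≤ τ := by positivity
  have hpow : (Λ ^ α) ^ (-(n : ℤ)) = τ ^ α := Real.rpow_zpow_comm hΛ.le α _
  have hlower : ∀ {t t' : ℝ}, 0 ≤ t → τ / C₁ ≤ t → t ^ α / C ≤ t' →
      τ ^ α / (C * C₁ ^ α) ≤ t' := by
    intro t t' ht hτt htt'
    calc τ ^ α / (C * C₁ ^ α) = (τ / C₁) ^ α / C := by
          rw [Real.div_rpow hτ hC₁0.le]; ring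
      _ ≤ t ^ α / C := by gcongr
      _ ≤ _ := htt'
  rw [hpow]
  refine ⟨⟨hlower (diamOf_nonneg hd A) hlo ?_, ?_⟩, ?_⟩
  · exact (div_le_iff₀' hC0).2 (rpow_diamOf_le hd hbd' hα hC0 hsnow A)
  · calc diamOf d' A ≤ C * diamOf d A ^ α := diamOf_le_rpow hd hbd hα.le hC0.le hsnow A
      _ ≤ C * (C₁ * τ) ^ α := by gcongr; exact diamOf_nonneg hd A
      _ = C * C₁ ^ α * τ ^ α := by rw [Real.mul_rpow hC₁0.le hτ]; ring
  · intro B hB hdisj a ha b hb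
    exact hlower (hd a b) (hsep B hB hdisj a ha b hb) (hsnow a b).1

lemma IsVisualWith.exists_isSnowflakeEquiv (hvis : IsVisualWith d X w Λ)
    (hvis' : IsVisualWith d' X w Λ') (hd : IsMetricFun d) (hd' : IsMetricFun d')
    (hbd : ∃ M : ℝ, ∀ x y, d x y ≤ M) (hbd' : ∃ M : ℝ, ∀ x y, d' x y ≤ M)
    (hΛ : 1 < Λ) (hΛ' : 1 < Λ') :
    ∃ α C : ℝ, 0 < α ∧ 1 ≤ C ∧ IsSnowflakeEquiv d d' α C := by
  obtain ⟨C, hC, hbounds⟩ := hvis.exists_dist_bounds_of_last_proximate hd hbd hΛ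
  obtain ⟨C', hC', hbounds'⟩ := hvis'.exists_dist_bounds_of_last_proximate hd' hbd' hΛ'
  set α := Real.logb Λ Λ'
  have hα : 0 < α := Real.logb_pos hΛ hΛ'
  refine ⟨α, C ^ α * C', hα,
    one_le_mul_of_one_le_of_one_le (Real.one_le_rpow hC hα.le) hC', fun x y => ?_⟩
  rcases eq_or_ne x y with rfl | hxy
  · simp [(hd.2.1 x x).2 rfl, (hd'.2.1 x x).2 rfl, Real.zero_rpow hα.ne']
  obtain ⟨m, hnear, hfar⟩ :=
    exists_proximate_not_proximate_succ hvis.2.1 (hvis.exists_not_proximate hd hbd hΛ hxy)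
  have hpow : (Λ ^ (-(m : ℤ))) ^ α = Λ' ^ (-(m : ℤ)) := by
    rw [← Real.rpow_zpow_comm (zero_lt_one.trans hΛ).le,
      Real.rpow_logb (zero_lt_one.trans hΛ) hΛ.ne' (zero_lt_one.trans hΛ')]
  obtain ⟨hτd, hdτ⟩ := hbounds m x y hnear hfar
  obtain ⟨hτd', hdτ'⟩ := hbounds' m x y hnear hfar
  exact snowflake_bounds_of_comparable (hd.1 x y) (by positivity) hα.le
    (zero_lt_one.trans_le hC) (zero_lt_one.trans_le hC') hdτ hτd (hpow ▸ hdτ') (hpow ▸ hτd')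

end Snowflake

/-- If `{Xⁿ}` is a visual approximation of width `w` with parameter `Λ > 1` for the
bounded metric `d` on `S` and `d'` is another bounded metric on `S`, then `{Xⁿ}` is a
visual approximation of width `w` for `(S,d')` (for some parameter `Λ' > 1`) if and only
if the identity map `(S,d) → (S,d')` is a snowflake equivalence; moreover, if
`d' ≍ d^α`, then `{Xⁿ}` is a visual approximation for `(S,d')` with parameter `Λ^α`. -/
theorem stmt10 (S : Type*) (d d' : S → S → ℝ)
    (hd : IsMetricFun d) (hd' : IsMetricFun d')
    (hbd : ∃ M : ℝ, ∀ x y, d x y ≤ M) (hbd' : ∃ M : ℝ, ∀ x y, d' x y ≤ M)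
    (X : ℕ → Set (Set S)) (w : ℕ) (Λ : ℝ) (hΛ : 1 < Λ)
    (hvis : IsVisualWith d X w Λ) :
    ((∃ Λ' : ℝ, 1 < Λ' ∧ IsVisualWith d' X w Λ') ↔
      ∃ α C : ℝ, 0 < α ∧ 1 ≤ C ∧
        ∀ x y : S, d x y ^ α / C ≤ d' x y ∧ d' x y ≤ C * d x y ^ α) ∧
    (∀ α C : ℝ, 0 < α → 1 ≤ C →
      (∀ x y : S, d x y ^ α / C ≤ d' x y ∧ d' x y ≤ C * d x y ^ α) →
      IsVisualWith d' X w (Λ ^ α)) := by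
  have htransfer : ∀ α C : ℝ, 0 < α → 1 ≤ C → IsSnowflakeEquiv d d' α C →
      IsVisualWith d' X w (Λ ^ α) := fun α C hα hC hsnow =>
    hvis.of_isSnowflakeEquiv hd.1 hbd hbd' (zero_lt_one.trans hΛ) hα hC hsnow
  refine ⟨⟨fun ⟨Λ', hΛ', hvis'⟩ => hvis.exists_isSnowflakeEquiv hvis' hd hd' hbd hbd' hΛ hΛ',
    fun ⟨α, C, hα, hC, hsnow⟩ => ⟨Λ ^ α, ?_, htransfer α C hα hC hsnow⟩⟩, htransfer⟩
  exact Real.one_lt_rpow hΛ hα
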